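/- If F ⊑ G and F ⊆ H ⊑* G, then F ⊑ H. -/

import Mathlib

open scoped Classical

/-- A combinatorial pregeometry (matroid) on the ground type `α`, given by a
dimension (rank) function on finite subsets. -/
structure Pregeometry (α : Type*) [DecidableEq α] where
  dim : Finset α → ℕ
  dim_empty : dim ∅ = 0
  dim_le_insert : ∀ (A : Finset α) (x : α), dim A ≤ dim (insert x A)
  insert_le_dim : ∀ (A : Finset α) (x : α), dim (insert x A) ≤ dim A + 1
  submodular : ∀ A B : Finset α, dim (A ∪ B) + dim (A ∩ B) ≤ dim A + dim B

namespace Pregeometry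

variable {α : Type*} [DecidableEq α] (G : Pregeometry α)

/-- Closure of an arbitrary subset. -/
def cl (Y : Set α) : Set α :=
  {x | ∃ A : Finset α, ↑A ⊆ Y ∧ G.dim (insert x A) = G.dim A}

/-- `Y` is closed (in the ambient pregeometry `G`). -/
def IsClosed (Y : Set α) : Prop := G.cl Y = Y

/-- `X` is a closed set of the subpregeometry of `G` induced on `P`
(whose closure operator is `Y ↦ cl Y ∩ P`). -/
def IsClosedIn (P X : Set α) : Prop := X ⊆ P ∧ G.cl X ∩ P = X

/-- Dimension of an arbitrary subset, with value `⊤` when infinite-dimensional. -/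
noncomputable def edim (Y : Set α) : ℕ∞ :=
  ⨆ (A : Finset α) (_ : ↑A ⊆ Y), (G.dim A : ℕ∞)

/-- The (natural number) dimension of a finite-dimensional subset. -/
noncomputable def sdim (Y : Set α) : ℕ := (G.edim Y).toNat

/-- The alternating inclusion–exclusion sum
`Δ_G(Σ) = Σ_{∅ ≠ S ⊆ Σ} (-1)^{|S|+1} d(⋂ S)` of a finite collection of sets. -/
noncomputable def flatSum (Sig : Finset (Set α)) : ℤ :=
  ∑ S ∈ Sig.powerset.filter (· ≠ ∅),
    (-1) ^ (S.card + 1) * (G.sdim (⋂₀ ↑S) : ℤ)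

/-- `P ⊑* Q`: for the subpregeometries induced on `P ⊆ Q`, the dimension of the
intersection of two closed sets of `P` equals the dimension of the intersection
of their closures in `Q` (the closure of `X` in `Q` being `cl X ∩ Q`). -/
def SqStar (P Q : Set α) : Prop := P ⊆ Q ∧
  ∀ X₁ X₂ : Set α, G.IsClosedIn P X₁ → G.IsClosedIn P X₂ →
    G.edim (X₁ ∩ X₂) = G.edim (G.cl X₁ ∩ G.cl X₂ ∩ Q)

/-- `P ⊑ Q`: `P` is strongly embedded in `Q`: for every finite collection `Σ` of
finite-dimensional closed sets of `Q`, `Δ_P(Σ_P) ≤ Δ_Q(Σ)` where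
`Σ_P = {E ∩ P : E ∈ Σ}`. -/
def Sq (P Q : Set α) : Prop := P ⊆ Q ∧
  ∀ Sig : Finset (Set α), (∀ E ∈ Sig, G.IsClosedIn Q E) →
    (∀ E ∈ Sig, G.edim E ≠ ⊤) →
    G.flatSum (Sig.image (· ∩ P)) ≤ G.flatSum Sig

/-- The subpregeometry induced on `P` is flat: every finite collection of
finite-dimensional closed sets satisfies `d(⋃ Σ) ≤ Δ(Σ)`. -/
def FlatIn (P : Set α) : Prop :=
  ∀ Sig : Finset (Set α), (∀ E ∈ Sig, G.IsClosedIn P E) →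
    (∀ E ∈ Sig, G.edim E ≠ ⊤) →
    (G.sdim (⋃₀ ↑Sig) : ℤ) ≤ G.flatSum Sig

/-- The α-function of the subpregeometry of `G` induced on `P`:
`α(X) = |X| − d(X) − Σ_{Y ⊊ X closed} α(Y)`. -/
noncomputable def alphaIn (P : Set α) (X : Finset α) : ℤ :=
  (X.card : ℤ) - (G.dim X : ℤ) -
    ∑ Y ∈ (X.powerset.filter fun Y => Y ≠ X ∧ G.IsClosedIn P ↑Y).attach,
      alphaIn P Y.1
termination_by X.card
decreasing_by
  have h := Y.2
  simp only [Finset.mem_filter, Finset.mem_powerset] at h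
  exact Finset.card_lt_card (lt_of_le_of_ne h.1 h.2.1)

end Pregeometry

/-- A hypergraph on the vertex type `α`: a set of nonempty finite edges. -/
structure PHypergraph (α : Type*) where
  edges : Set (Finset α)
  nonempty_edges : ∀ e ∈ edges, e ≠ ∅

namespace PHypergraph

variable {α : Type*} [DecidableEq α] (A : PHypergraph α)

/-- The set of edges contained in a set of vertices. -/
def edgesIn (P : Set α) : Set (Finset α) := {e | e ∈ A.edges ∧ ↑e ⊆ P}

/-- The predimension `δ(P) = |P| − |R[P]|` of a finite set of vertices. -/
noncomputable def delta (P : Finset α) : ℤ :=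
  (P.card : ℤ) - (A.edgesIn ↑P).ncard

/-- The relative predimension `δ(L/P) = |L∖P| − |R[L∪P]∖R[P]|`. -/
noncomputable def deltaRel (L : Finset α) (P : Set α) : ℤ :=
  ((↑L \ P : Set α).ncard : ℤ) -
    ({e | e ∈ A.edges ∧ ↑e ⊆ ↑L ∪ P ∧ ¬ ↑e ⊆ P} : Set (Finset α)).ncard

/-- `P` is self-sufficient in `A`: `δ(X/P) ≥ 0` for every finite `X`, stated so
as to be meaningful even when infinitely many edges are involved. -/
def SelfSuff (P : Set α) : Prop :=
  ∀ X : Finset α, ∀ Es : Finset (Finset α),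
    (∀ e ∈ Es, e ∈ A.edges ∧ ↑e ⊆ ↑X ∪ P ∧ ¬ ↑e ⊆ P) →
    (Es.card : ℤ) ≤ ((↑X \ P : Set α).ncard : ℤ)

/-- The dimension function associated to a hypergraph:
`d(X) = inf {δ(B) : X ⊆ B finite}`. -/
noncomputable def hdim (X : Finset α) : ℤ :=
  sInf {d : ℤ | ∃ B : Finset α, X ⊆ B ∧ d = A.delta B}

/-- The induced subhypergraph on a set `P` of vertices (keeping `α` as the
ambient vertex type). -/
def restrict (P : Set α) : PHypergraph α :=
  ⟨{e | e ∈ A.edges ∧ ↑e ⊆ P}, fun e he => A.nonempty_edges e he.1⟩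

/-- A pregeometry `G` is represented by the hypergraph `A` if the associated
dimension function of `A` is the dimension function of `G`. -/
def Represents (G : Pregeometry α) : Prop :=
  ∀ X : Finset α, (G.dim X : ℤ) = A.hdim X

end PHypergraph

/-!
Taking closures in `G` turns a family `Σ` of finite-dimensional closed sets of `H` into one of
`G`. By `H ⊑* G` this is dimension preserving and commutes with finite intersections, so
`Δ_G(cl Σ) = Δ_H(Σ)`; and since `cl E ∩ H = E`, both families have the same traces on `F ⊆ H`.
Hence `F ⊑ G`, applied to `cl Σ`, gives `F ⊑ H`.
-/

namespace Pregeometry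

variable {α : Type*} [DecidableEq α] (G : Pregeometry α)

theorem dim_mono {A B : Finset α} (h : A ⊆ B) : G.dim A ≤ G.dim B := by
  rw [← Finset.union_sdiff_of_subset h]
  induction B \ A using Finset.induction with
  | empty => simp
  | insert a C _ ih =>
    rw [Finset.union_insert]
    exact ih.trans (G.dim_le_insert _ a)

theorem dim_union_eq_of_subset {A B C : Finset α} (h : G.dim (A ∪ B) = G.dim B)
    (hBC : B ⊆ C) : G.dim (A ∪ C) = G.dim C := by
  have hsub := G.submodular (A ∪ B) C
  rw [Finset.union_assoc, Finset.union_eq_right.mpr hBC, h] at hsub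
  have hB_le : G.dim B ≤ G.dim ((A ∪ B) ∩ C) :=
    G.dim_mono (Finset.subset_inter Finset.subset_union_right hBC)
  have hC_le : G.dim C ≤ G.dim (A ∪ C) := G.dim_mono Finset.subset_union_right
  omega

theorem dim_insert_eq_of_subset {x : α} {A C : Finset α}
    (hA : G.dim (insert x A) = G.dim A) (hAC : A ⊆ C) : G.dim (insert x C) = G.dim C := by
  rw [Finset.insert_eq] at hA ⊢
  exact G.dim_union_eq_of_subset hA hAC

theorem subset_cl (X : Set α) : X ⊆ G.cl X :=
  fun x hx => ⟨{x}, by simpa using hx, by simp⟩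

theorem cl_mono {X Y : Set α} (h : X ⊆ Y) : G.cl X ⊆ G.cl Y :=
  fun _ ⟨A, hA, hd⟩ => ⟨A, hA.trans h, hd⟩

theorem exists_subset_dim_union_eq {X : Set α} {A : Finset α} (hA : ↑A ⊆ G.cl X) :
    ∃ B : Finset α, ↑B ⊆ X ∧ G.dim (A ∪ B) = G.dim B := by
  induction A using Finset.induction with
  | empty => exact ⟨∅, by simp, by simp⟩
  | insert a A _ ih =>
    obtain ⟨W, hW, hWd⟩ := hA (Finset.mem_insert_self a A)
    obtain ⟨B, hB, hBd⟩ := ih (fun y hy => hA (Finset.mem_insert_of_mem hy))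
    refine ⟨W ∪ B, by simp [Set.union_subset hW hB], ?_⟩
    rw [Finset.insert_union,
      G.dim_insert_eq_of_subset hWd (Finset.subset_union_left.trans Finset.subset_union_right),
      G.dim_union_eq_of_subset hBd Finset.subset_union_right]

theorem cl_cl (X : Set α) : G.cl (G.cl X) = G.cl X := by
  refine subset_antisymm ?_ (G.subset_cl _)
  rintro x ⟨A, hA, hd⟩
  obtain ⟨B, hB, hBd⟩ := G.exists_subset_dim_union_eq hA
  have hxAB : G.dim (insert x (A ∪ B)) = G.dim (A ∪ B) :=
    G.dim_insert_eq_of_subset hd Finset.subset_union_left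
  have hB_le : G.dim B ≤ G.dim (insert x B) := G.dim_le_insert _ _
  have hxB_le : G.dim (insert x B) ≤ G.dim (insert x (A ∪ B)) :=
    G.dim_mono (Finset.insert_subset_insert _ Finset.subset_union_right)
  exact ⟨B, hB, by omega⟩

theorem le_edim {X : Set α} {A : Finset α} (hA : ↑A ⊆ X) : (G.dim A : ℕ∞) ≤ G.edim X :=
  le_iSup₂_of_le A hA le_rfl

theorem edim_mono {X Y : Set α} (h : X ⊆ Y) : G.edim X ≤ G.edim Y :=
  iSup₂_le fun _ hA => G.le_edim (hA.trans h)

theorem exists_dim_eq_edim {X : Set α} (h : G.edim X ≠ ⊤) :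
    ∃ A : Finset α, ↑A ⊆ X ∧ (G.dim A : ℕ∞) = G.edim X := by
  have : Nonempty {A : Finset α // ↑A ⊆ X} := ⟨⟨∅, by simp⟩⟩
  rw [edim, iSup_subtype'] at h ⊢
  obtain ⟨⟨A, hA⟩, hAd⟩ := ENat.exists_eq_iSup_of_lt_top h.lt_top
  exact ⟨A, hA, hAd⟩

theorem subset_cl_of_edim_le {C D : Set α} (hCD : C ⊆ D) (hd : G.edim D ≤ G.edim C)
    (hfin : G.edim C ≠ ⊤) : D ⊆ G.cl C := by
  intro x hx
  by_contra hxC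
  obtain ⟨A, hA, hAd⟩ := G.exists_dim_eq_edim hfin
  have hsucc : G.dim (insert x A) = G.dim A + 1 := by
    have := G.dim_le_insert A x
    have := G.insert_le_dim A x
    have : G.dim (insert x A) ≠ G.dim A := fun he => hxC ⟨A, hA, he⟩
    omega
  have hxA : (↑(insert x A) : Set α) ⊆ D := by
    rw [Finset.coe_insert]
    exact Set.insert_subset hx (hA.trans hCD)
  have := (G.le_edim hxA).trans hd
  rw [hsucc, ← hAd] at this
  norm_cast at this
  omega

variable {G}

theorem isClosedIn_sInter {P : Set α} {S : Set (Set α)} (hS : S.Nonempty)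
    (h : ∀ E ∈ S, G.IsClosedIn P E) : G.IsClosedIn P (⋂₀ S) := by
  obtain ⟨E₀, hE₀⟩ := hS
  refine ⟨(Set.sInter_subset_of_mem hE₀).trans (h E₀ hE₀).1, subset_antisymm ?_ ?_⟩
  · refine fun x hx => Set.mem_sInter.2 fun E hE => ?_
    rw [← (h E hE).2]
    exact ⟨G.cl_mono (Set.sInter_subset_of_mem hE) hx.1, hx.2⟩
  · exact fun x hx => ⟨G.subset_cl _ hx, (h E₀ hE₀).1 (hx E₀ hE₀)⟩

theorem IsClosedIn.inter {P X₁ X₂ : Set α} (h₁ : G.IsClosedIn P X₁) (h₂ : G.IsClosedIn P X₂) :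
    G.IsClosedIn P (X₁ ∩ X₂) := by
  simpa using isClosedIn_sInter (S := {X₁, X₂}) (by simp) (by simp [h₁, h₂])

theorem IsClosedIn.cl_inter_of_subset {P X F : Set α} (hX : G.IsClosedIn P X) (hF : F ⊆ P) :
    G.cl X ∩ F = X ∩ F := by
  conv_rhs => rw [← hX.2]
  rw [Set.inter_assoc, Set.inter_eq_right.mpr hF]

theorem injOn_cl {P : Set α} : Set.InjOn G.cl {X | G.IsClosedIn P X} :=
  fun X₁ h₁ X₂ h₂ he => by rw [← h₁.2, ← h₂.2, he]

theorem isClosedIn_univ_cl (X : Set α) : G.IsClosedIn Set.univ (G.cl X) :=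
  ⟨Set.subset_univ _, by rw [G.cl_cl, Set.inter_univ]⟩

namespace SqStar

variable {H : Set α}

theorem edim_cl (hH : G.SqStar H Set.univ) {X : Set α} (hX : G.IsClosedIn H X) :
    G.edim (G.cl X) = G.edim X := by
  simpa using (hH.2 X X hX hX).symm

theorem cl_inter (hH : G.SqStar H Set.univ) {X₁ X₂ : Set α} (h₁ : G.IsClosedIn H X₁)
    (h₂ : G.IsClosedIn H X₂) (hfin : G.edim (X₁ ∩ X₂) ≠ ⊤) :
    G.cl (X₁ ∩ X₂) = G.cl X₁ ∩ G.cl X₂ := by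
  have hsub : G.cl (X₁ ∩ X₂) ⊆ G.cl X₁ ∩ G.cl X₂ :=
    Set.subset_inter (G.cl_mono Set.inter_subset_left) (G.cl_mono Set.inter_subset_right)
  have hdim : G.edim (G.cl (X₁ ∩ X₂)) = G.edim (X₁ ∩ X₂) := hH.edim_cl (h₁.inter h₂)
  refine hsub.antisymm ?_
  rw [← G.cl_cl (X₁ ∩ X₂)]
  refine G.subset_cl_of_edim_le hsub ?_ (hdim ▸ hfin)
  rw [hdim, hH.2 X₁ X₂ h₁ h₂, Set.inter_univ]

theorem cl_sInter (hH : G.SqStar H Set.univ) {S : Finset (Set α)} (hS : S.Nonempty)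
    (hcl : ∀ E ∈ S, G.IsClosedIn H E) (hfin : ∀ E ∈ S, G.edim E ≠ ⊤) :
    G.cl (⋂₀ ↑S) = ⋂₀ (G.cl '' ↑S) := by
  induction hS using Finset.Nonempty.cons_induction with
  | singleton E => simp
  | cons E S hE hS ih =>
    simp only [Finset.forall_mem_cons] at hcl hfin
    have hSfin : G.edim (E ∩ ⋂₀ ↑S) ≠ ⊤ :=
      ne_top_of_le_ne_top hfin.1 (G.edim_mono Set.inter_subset_left)
    simp only [Finset.coe_cons, Set.sInter_insert, Set.image_insert_eq]
    rw [hH.cl_inter hcl.1 (isClosedIn_sInter (by simpa using hS) (by simpa using hcl.2)) hSfin,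
      ih hcl.2 hfin.2]

theorem sdim_sInter_cl (hH : G.SqStar H Set.univ) {S : Finset (Set α)} (hS : S.Nonempty)
    (hcl : ∀ E ∈ S, G.IsClosedIn H E) (hfin : ∀ E ∈ S, G.edim E ≠ ⊤) :
    G.sdim (⋂₀ (G.cl '' ↑S)) = G.sdim (⋂₀ ↑S) := by
  rw [sdim, sdim, ← hH.cl_sInter hS hcl hfin,
    hH.edim_cl (isClosedIn_sInter (by simpa using hS) (by simpa using hcl))]

end SqStar

variable (G)

theorem flatSum_image_of_injOn {f : Set α → Set α} {Sig : Finset (Set α)}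
    (hf : Set.InjOn f ↑Sig)
    (hdim : ∀ S ⊆ Sig, S.Nonempty → G.sdim (⋂₀ (f '' ↑S)) = G.sdim (⋂₀ ↑S)) :
    G.flatSum (Sig.image f) = G.flatSum Sig := by
  unfold flatSum
  rw [Finset.powerset_image, Finset.filter_image]
  simp only [ne_eq, Finset.image_eq_empty]
  rw [Finset.sum_image ((Finset.image_injOn_powerset_of_injOn hf).mono
    fun S hS => (Finset.mem_filter.1 hS).1)]
  refine Finset.sum_congr rfl fun S hS => ?_
  obtain ⟨hS, hne⟩ := Finset.mem_filter.1 hS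
  rw [Finset.mem_powerset] at hS
  rw [Finset.card_image_of_injOn (hf.mono hS), Finset.coe_image,
    hdim S hS (Finset.nonempty_iff_ne_empty.2 hne)]

end Pregeometry

/-- if `F ⊑ G` and `F ⊆ H ⊑* G`, then `F ⊑ H`. -/
theorem sq_of_intermediate_sqStar {α : Type*} [DecidableEq α] (G : Pregeometry α)
    (F H : Set α) (hF : G.Sq F Set.univ) (hFH : F ⊆ H)
    (hH : G.SqStar H Set.univ) : G.Sq F H := by
  refine ⟨hFH, fun Sig hcl hfin => ?_⟩
  have hclSig : ∀ E ∈ Sig.image G.cl, G.IsClosedIn Set.univ E := by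
    simp only [Finset.forall_mem_image]
    exact fun E _ => Pregeometry.isClosedIn_univ_cl E
  have hfinSig : ∀ E ∈ Sig.image G.cl, G.edim E ≠ ⊤ := by
    simp only [Finset.forall_mem_image]
    exact fun E hE => hH.edim_cl (hcl E hE) ▸ hfin E hE
  have htrace : (Sig.image G.cl).image (· ∩ F) = Sig.image (· ∩ F) := by
    rw [Finset.image_image]
    exact Finset.image_congr fun E hE => (hcl E hE).cl_inter_of_subset hFH
  have hflat : G.flatSum (Sig.image G.cl) = G.flatSum Sig :=
    G.flatSum_image_of_injOn (Pregeometry.injOn_cl.mono hcl) fun S hS hne =>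
      hH.sdim_sInter_cl hne (fun E hE => hcl E (hS hE)) fun E hE => hfin E (hS hE)
  simpa only [htrace, hflat] using hF.2 _ hclSig hfinSig
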